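/- arXiv:1502.04846 — 3 statements merged into one kernel-verified Lean document; each statement's English description precedes it below -/
import Mathlib

section
/- Let A, B ⊆ ℝⁿ with A ⊆ B and bdry(B) ⊆ A. If A is convex, then B is convex. -/
/-!
Suppose `x, y ∈ B` but a point `z` of the segment `[x, y]` lies outside `B`. The segments `[x, z]`
and `[z, y]` are connected and each meets both `B` and its complement, so each contains a point
of `frontier B ⊆ A`. The point `z` lies between these two points of `A`, hence in `A ⊆ B`.
-/

theorem IsPreconnected.inter_frontier_nonempty {X : Type*} [TopologicalSpace X] {s t : Set X}
    (hs : IsPreconnected s) (hst : (s ∩ t).Nonempty) (hst' : (s \ t).Nonempty) :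
    (s ∩ frontier t).Nonempty := by
  by_contra h
  have not_frontier : ∀ w ∈ s, w ∈ closure t → w ∈ interior t := fun w hw hc ↦
    by_contra fun hi ↦ h ⟨w, hw, hc, hi⟩
  obtain ⟨x, hxs, hxt⟩ := hst
  obtain ⟨z, hzs, hzt⟩ := hst'
  obtain ⟨w, -, hw_int, hw_ext⟩ :=
    hs (interior t) (closure t)ᶜ isOpen_interior isClosed_closure.isOpen_compl
      (fun w hw ↦ (em (w ∈ closure t)).imp (not_frontier w hw) id)
      ⟨x, hxs, not_frontier x hxs (subset_closure hxt)⟩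
      ⟨z, hzs, fun hz ↦ hzt (interior_subset (not_frontier z hzs hz))⟩
  exact hw_ext (interior_subset_closure hw_int)

theorem Wbtw.wbtw_of_wbtw_left_of_wbtw_right {R V P : Type*} [Field R] [LinearOrder R]
    [IsStrictOrderedRing R] [AddCommGroup V] [Module R V] [AddTorsor V P] {x y z p q : P}
    (h : Wbtw R x z y) (hp : Wbtw R x p z) (hq : Wbtw R z q y) : Wbtw R p z q :=
  (h.trans_left_right hp).symm.trans_left_right hq.symm |>.symm

/-- If `A ⊆ B`, the boundary of `B` is contained in `A`, and `A` is convex,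
then `B` is convex. -/
theorem convex_of_subset_frontier_subset {n : ℕ}
    (A B : Set (EuclideanSpace ℝ (Fin n))) (hAB : A ⊆ B)
    (hfr : frontier B ⊆ A) (hA : Convex ℝ A) : Convex ℝ B := by
  refine convex_iff_segment_subset.2 fun x hx y hy z hz ↦ by_contra fun hzB ↦ ?_
  obtain ⟨p, hp, hpB⟩ := (convex_segment x z).isPreconnected.inter_frontier_nonempty
    ⟨x, left_mem_segment ℝ x z, hx⟩ ⟨z, right_mem_segment ℝ x z, hzB⟩
  obtain ⟨q, hq, hqB⟩ := (convex_segment z y).isPreconnected.inter_frontier_nonempty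
    ⟨y, right_mem_segment ℝ z y, hy⟩ ⟨z, left_mem_segment ℝ z y, hzB⟩
  have hz_pq : z ∈ segment ℝ p q := mem_segment_iff_wbtw.2 <|
    (mem_segment_iff_wbtw.1 hz).wbtw_of_wbtw_left_of_wbtw_right (mem_segment_iff_wbtw.1 hp)
      (mem_segment_iff_wbtw.1 hq)
  exact hzB (hAB (hA.segment_subset (hfr hpB) (hfr hqB) hz_pq))
end

section
/- Let T: ℝⁿ → [0,∞] be the minimum time function for the differential inclusion ẋ ∈ F(x) with closed target K, where F satisfies (F). For x₀ ∈ K, the horizontal proximal subdifferential of T at x₀ equals N^P_K(x₀) ∩ {ζ ∈ ℝⁿ : h(x₀, ζ) ≥ 0}, where h(x,ζ) = min_{v ∈ F(x)} ⟨v, ζ⟩. -/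
open scoped RealInnerProductSpace ENNReal
open MeasureTheory Set

noncomputable section

/-- A trajectory of the differential inclusion `ẋ ∈ F(x)` on `[0,T]` starting at `x₀`:
an absolutely continuous curve, encoded by an integrable velocity selection `v` with
`v t ∈ F (x t)` a.e. and `x t = x₀ + ∫₀ᵗ v`. -/
def IsTrajectory {n : ℕ} (F : EuclideanSpace ℝ (Fin n) → Set (EuclideanSpace ℝ (Fin n)))
    (x₀ : EuclideanSpace ℝ (Fin n)) (T : ℝ) (x : ℝ → EuclideanSpace ℝ (Fin n)) : Prop :=
  x 0 = x₀ ∧ ∃ v : ℝ → EuclideanSpace ℝ (Fin n),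
    IntervalIntegrable v volume 0 T ∧
    (∀ᵐ t ∂(volume.restrict (Set.Ioc (0:ℝ) T)), v t ∈ F (x t)) ∧
    ∀ t ∈ Set.Icc (0:ℝ) T, x t = x₀ + ∫ s in (0:ℝ)..t, v s

/-- Times at which some trajectory starting at `x₀` reaches the target `K`. -/
def reachTimes {n : ℕ} (F : EuclideanSpace ℝ (Fin n) → Set (EuclideanSpace ℝ (Fin n)))
    (K : Set (EuclideanSpace ℝ (Fin n))) (x₀ : EuclideanSpace ℝ (Fin n)) : Set ℝ :=
  {T | 0 ≤ T ∧ ∃ x : ℝ → EuclideanSpace ℝ (Fin n), IsTrajectory F x₀ T x ∧ x T ∈ K}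

/-- The minimum time function `𝒯`, with value `∞` when `K` is unreachable from `x₀`. -/
def minTime {n : ℕ} (F : EuclideanSpace ℝ (Fin n) → Set (EuclideanSpace ℝ (Fin n)))
    (K : Set (EuclideanSpace ℝ (Fin n))) (x₀ : EuclideanSpace ℝ (Fin n)) : ℝ≥0∞ :=
  sInf (ENNReal.ofReal '' reachTimes F K x₀)

/-- Assumption (F): nonempty convex compact values, local Lipschitz continuity,
and linear growth. -/
structure AssumptionF {n : ℕ}
    (F : EuclideanSpace ℝ (Fin n) → Set (EuclideanSpace ℝ (Fin n))) : Prop where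
  nonempty : ∀ x, (F x).Nonempty
  convex : ∀ x, Convex ℝ (F x)
  compact : ∀ x, IsCompact (F x)
  locLip : ∀ C : Set (EuclideanSpace ℝ (Fin n)), IsCompact C → ∃ L > (0:ℝ),
    ∀ x ∈ C, ∀ y ∈ C, ∀ v ∈ F x, ∃ w ∈ F y, ‖v - w‖ ≤ L * ‖x - y‖
  growth : ∃ γ > (0:ℝ), ∀ x, ∀ v ∈ F x, ‖v‖ ≤ γ * (1 + ‖x‖)

/-- The minimized Hamiltonian `h(x,ζ) = min_{v ∈ F(x)} ⟪v, ζ⟫`. -/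
def minHam {n : ℕ} (F : EuclideanSpace ℝ (Fin n) → Set (EuclideanSpace ℝ (Fin n)))
    (x ζ : EuclideanSpace ℝ (Fin n)) : ℝ :=
  sInf ((fun v => ⟪v, ζ⟫) '' F x)

/-- The proximal normal cone to a set `S ⊆ ℝⁿ` at `x`. -/
def IsProxNormal {n : ℕ} (S : Set (EuclideanSpace ℝ (Fin n))) (x v : EuclideanSpace ℝ (Fin n)) :
    Prop :=
  ∃ σ : ℝ, 0 ≤ σ ∧ ∀ y ∈ S, ⟪v, y - x⟫ ≤ σ * ‖y - x‖ ^ 2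

/-- The sublevel set `𝓡(r) = {y : 𝒯(y) ≤ r}` of the minimum time function. -/
def sublevel {n : ℕ} (F : EuclideanSpace ℝ (Fin n) → Set (EuclideanSpace ℝ (Fin n)))
    (K : Set (EuclideanSpace ℝ (Fin n))) (r : ℝ) : Set (EuclideanSpace ℝ (Fin n)) :=
  {y | minTime F K y ≤ ENNReal.ofReal r}

/-- Membership in the epigraph of the minimum time function: `β ≥ 𝒯(y)` (and `β ≥ 0`). -/
def memEpi {n : ℕ} (F : EuclideanSpace ℝ (Fin n) → Set (EuclideanSpace ℝ (Fin n)))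
    (K : Set (EuclideanSpace ℝ (Fin n))) (y : EuclideanSpace ℝ (Fin n)) (β : ℝ) : Prop :=
  0 ≤ β ∧ minTime F K y ≤ ENNReal.ofReal β

/-- `(ζ, α)` is a proximal normal to the epigraph of `𝒯` at `(x, 𝒯(x))`, where
`τ = 𝒯(x)` (assumed finite). -/
def IsProxNormalEpi {n : ℕ} (F : EuclideanSpace ℝ (Fin n) → Set (EuclideanSpace ℝ (Fin n)))
    (K : Set (EuclideanSpace ℝ (Fin n))) (x : EuclideanSpace ℝ (Fin n))
    (ζ : EuclideanSpace ℝ (Fin n)) (α : ℝ) : Prop :=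
  ∃ σ : ℝ, 0 ≤ σ ∧ ∀ y β, memEpi F K y β →
    ⟪ζ, y - x⟫ + α * (β - (minTime F K x).toReal) ≤
      σ * (‖y - x‖ ^ 2 + |β - (minTime F K x).toReal| ^ 2)

/-- The proximal subdifferential `∂^P 𝒯(x) = {ζ : (ζ,-1) ∈ N^P_{epi 𝒯}(x,𝒯(x))}`. -/
def proxSubdiff {n : ℕ} (F : EuclideanSpace ℝ (Fin n) → Set (EuclideanSpace ℝ (Fin n)))
    (K : Set (EuclideanSpace ℝ (Fin n))) (x : EuclideanSpace ℝ (Fin n)) :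
    Set (EuclideanSpace ℝ (Fin n)) :=
  {ζ | IsProxNormalEpi F K x ζ (-1)}

/-- The horizontal proximal subdifferential `∂^∞ 𝒯(x) = {ζ : (ζ,0) ∈ N^P_{epi 𝒯}(x,𝒯(x))}`. -/
def horizSubdiff {n : ℕ} (F : EuclideanSpace ℝ (Fin n) → Set (EuclideanSpace ℝ (Fin n)))
    (K : Set (EuclideanSpace ℝ (Fin n))) (x : EuclideanSpace ℝ (Fin n)) :
    Set (EuclideanSpace ℝ (Fin n)) :=
  {ζ | IsProxNormalEpi F K x ζ 0}

end

/-!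
Testing the proximal inequality of `(ζ, 0)` at points of `K`, where `T = 0`, gives
`ζ ∈ N^P_K(x₀)`. If `⟪v, ζ⟫ < 0` for some `v ∈ F(x₀)`, Filippov's theorem yields a trajectory
that reaches `x₀` in time `t` from a point `y = x₀ - t v + O(t²)`; then `(y, t)` lies in the
epigraph of `T` while `⟪ζ, y - x₀⟫ ≈ -t ⟪v, ζ⟫` is of first order in `t`, contradicting the
proximal inequality, which bounds it by `O(t²)`.

Conversely, if `T(y) ≤ β`, follow a trajectory from `y` that reaches some `z ∈ K` in time about
`β`. Then `⟪ζ, y - x₀⟫ = ⟪ζ, z - x₀⟫ - ∫ ⟪ζ, ẋ⟫`; the first term is `O(‖z - x₀‖²)` because `ζ`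
is a proximal normal to `K`, and the second is `O(‖y - x₀‖ β + β²)` because `h(x₀, ζ) ≥ 0` and
`h` is Lipschitz in `x`.
-/

open Filter Topology Metric

section NearestPoint

variable {E : Type*} [NormedAddCommGroup E] [InnerProductSpace ℝ E]

theorem norm_sub_le_of_inner_le_zero {u₁ u₂ p₁ p₂ : E} (h₁ : ⟪u₁ - p₁, p₂ - p₁⟫ ≤ 0)
    (h₂ : ⟪u₂ - p₂, p₁ - p₂⟫ ≤ 0) : ‖p₁ - p₂‖ ≤ ‖u₁ - u₂‖ := by
  have key : ‖p₁ - p₂‖ ^ 2 ≤ ⟪u₁ - u₂, p₁ - p₂⟫ := by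
    have e : ⟪u₁ - u₂, p₁ - p₂⟫ =
        ‖p₁ - p₂‖ ^ 2 - ⟪u₁ - p₁, p₂ - p₁⟫ - ⟪u₂ - p₂, p₁ - p₂⟫ := by
      rw [← real_inner_self_eq_norm_sq]
      simp only [inner_sub_left, inner_sub_right, real_inner_comm]
      ring
    linarith
  nlinarith [real_inner_le_norm (u₁ - u₂) (p₁ - p₂), norm_nonneg (p₁ - p₂),
    norm_nonneg (u₁ - u₂)]

theorem norm_sub_sq_le_of_inner_le_zero {u a b a' b' : E} {δ : ℝ}
    (ha : ⟪u - a, a' - a⟫ ≤ 0) (hb : ⟪u - b, b' - b⟫ ≤ 0) (ha' : ‖b - a'‖ ≤ δ)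
    (hb' : ‖a - b'‖ ≤ δ) : ‖a - b‖ ^ 2 ≤ δ * (‖u - a‖ + ‖u - b‖) := by
  have e : ‖a - b‖ ^ 2 = ⟪u - b, a - b'⟫ + ⟪u - b, b' - b⟫ + ⟪u - a, b - a'⟫ + ⟪u - a, a' - a⟫ := by
    rw [← real_inner_self_eq_norm_sq]
    simp only [inner_sub_left, inner_sub_right, real_inner_comm]
    ring
  have h₁ := real_inner_le_norm (u - b) (a - b')
  have h₂ := real_inner_le_norm (u - a) (b - a')
  have h₃ := mul_le_mul_of_nonneg_left hb' (norm_nonneg (u - b))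
  have h₄ := mul_le_mul_of_nonneg_left ha' (norm_nonneg (u - a))
  nlinarith

/-- A nearest point of `C` to `u`: unique when `C` is nonempty, complete and convex, and a junk
value when `C` has no nearest point to `u`. -/
noncomputable def convexProj (C : Set E) (u : E) : E :=
  Classical.epsilon fun p => p ∈ C ∧ ∀ c ∈ C, ‖u - p‖ ≤ ‖u - c‖

variable {C : Set E}

theorem convexProj_spec (hne : C.Nonempty) (hC : IsComplete C) (hcv : Convex ℝ C) (u : E) :
    convexProj C u ∈ C ∧ ∀ c ∈ C, ‖u - convexProj C u‖ ≤ ‖u - c‖ := by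
  obtain ⟨p, hp, hmin⟩ := exists_norm_eq_iInf_of_complete_convex hne hC hcv u
  have : Nonempty C := hne.to_subtype
  refine Classical.epsilon_spec (p := fun p => p ∈ C ∧ ∀ c ∈ C, ‖u - p‖ ≤ ‖u - c‖)
    ⟨p, hp, fun c hc => hmin ▸ ?_⟩
  exact ciInf_le ⟨0, Set.forall_mem_range.2 fun _ => norm_nonneg _⟩ (⟨c, hc⟩ : C)

theorem convexProj_mem (hne : C.Nonempty) (hC : IsComplete C) (hcv : Convex ℝ C) (u : E) :
    convexProj C u ∈ C :=
  (convexProj_spec hne hC hcv u).1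

theorem norm_sub_convexProj_le (hne : C.Nonempty) (hC : IsComplete C) (hcv : Convex ℝ C)
    (u : E) {c : E} (hc : c ∈ C) : ‖u - convexProj C u‖ ≤ ‖u - c‖ :=
  (convexProj_spec hne hC hcv u).2 c hc

theorem inner_sub_convexProj_le_zero (hne : C.Nonempty) (hC : IsComplete C) (hcv : Convex ℝ C)
    (u : E) {c : E} (hc : c ∈ C) : ⟪u - convexProj C u, c - convexProj C u⟫ ≤ 0 := by
  obtain ⟨hp, hmin⟩ := convexProj_spec hne hC hcv u
  have : Nonempty C := hne.to_subtype
  refine (norm_eq_iInf_iff_real_inner_le_zero hcv hp).1 (le_antisymm ?_ ?_) c hc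
  · exact le_ciInf fun c => hmin c c.2
  · exact ciInf_le ⟨0, Set.forall_mem_range.2 fun _ => norm_nonneg _⟩ (⟨_, hp⟩ : C)

end NearestPoint

section HausdorffLipschitz

variable {X E : Type*} [PseudoMetricSpace X] [NormedAddCommGroup E]

def HausdorffLipschitzOn (Φ : X → Set E) (L : ℝ) (S : Set X) : Prop :=
  ∀ p ∈ S, ∀ q ∈ S, ∀ a ∈ Φ p, ∃ b ∈ Φ q, ‖a - b‖ ≤ L * dist p q

variable {Φ : X → Set E} {L : ℝ} {S : Set X}

theorem HausdorffLipschitzOn.nonempty (hΦ : HausdorffLipschitzOn Φ L S) {p q : X} (hp : p ∈ S)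
    (hq : q ∈ S) (hne : (Φ p).Nonempty) : (Φ q).Nonempty :=
  let ⟨a, ha⟩ := hne
  let ⟨b, hb, _⟩ := hΦ p hp q hq a ha
  ⟨b, hb⟩

theorem HausdorffLipschitzOn.mem_of_tendsto (hΦ : HausdorffLipschitzOn Φ L S) {ι : Type*}
    {l : Filter ι} [l.NeBot] {p : ι → X} {a : ι → E} {p₀ : X} {a₀ : E}
    (hp : Tendsto p l (𝓝 p₀)) (ha : Tendsto a l (𝓝 a₀)) (hpS : ∀ i, p i ∈ S) (hp₀ : p₀ ∈ S)
    (hmem : ∀ i, a i ∈ Φ (p i)) (hclosed : IsClosed (Φ p₀)) : a₀ ∈ Φ p₀ := by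
  obtain ⟨i₀⟩ := l.nonempty_of_neBot
  have hne : (Φ p₀).Nonempty := hΦ.nonempty (hpS i₀) hp₀ ⟨_, hmem i₀⟩
  refine (hclosed.mem_iff_infDist_zero hne).2 (le_antisymm ?_ infDist_nonneg)
  have hdist : ∀ i, infDist (a i) (Φ p₀) ≤ L * dist (p i) p₀ := fun i =>
    let ⟨b, hb, hab⟩ := hΦ _ (hpS i) _ hp₀ _ (hmem i)
    (infDist_le_dist_of_mem hb).trans (dist_eq_norm (a i) b ▸ hab)
  have hlim : Tendsto (fun i => L * dist (p i) p₀) l (𝓝 0) := by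
    simpa using (tendsto_iff_dist_tendsto_zero.1 hp).const_mul L
  exact le_of_tendsto_of_tendsto' ((continuous_infDist_pt _).tendsto a₀ |>.comp ha)
    hlim hdist

end HausdorffLipschitz

section ProjectionContinuity

variable {X E : Type*} [PseudoMetricSpace X] [NormedAddCommGroup E] [InnerProductSpace ℝ E]
  {Φ : X → Set E} {L : ℝ} {S : Set X}

theorem HausdorffLipschitzOn.norm_convexProj_sub_le (hΦ : HausdorffLipschitzOn Φ L S)
    (hC : ∀ p ∈ S, IsComplete (Φ p)) (hcv : ∀ p ∈ S, Convex ℝ (Φ p)) {p p₀ : X} (hp : p ∈ S)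
    (hp₀ : p₀ ∈ S) (hne : (Φ p₀).Nonempty) (u u₀ : E) :
    ‖convexProj (Φ p) u - convexProj (Φ p₀) u₀‖ ≤ ‖u - u₀‖ +
      √(L * dist p p₀ * (2 * ‖u₀ - convexProj (Φ p₀) u₀‖ + L * dist p p₀)) := by
  have hne' : (Φ p).Nonempty := hΦ.nonempty hp₀ hp hne
  set a := convexProj (Φ p) u₀
  set b := convexProj (Φ p₀) u₀
  set δ := L * dist p p₀
  obtain ⟨a', ha'Φ, ha'⟩ := hΦ p₀ hp₀ p hp b (convexProj_mem hne (hC p₀ hp₀) (hcv p₀ hp₀) u₀)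
  obtain ⟨b', hb'Φ, hb'⟩ := hΦ p hp p₀ hp₀ a (convexProj_mem hne' (hC p hp) (hcv p hp) u₀)
  rw [dist_comm] at ha'
  have hδ : 0 ≤ δ := (norm_nonneg _).trans hb'
  have hnonexp : ‖convexProj (Φ p) u - a‖ ≤ ‖u - u₀‖ :=
    norm_sub_le_of_inner_le_zero
      (inner_sub_convexProj_le_zero hne' (hC p hp) (hcv p hp) u
        (convexProj_mem hne' (hC p hp) (hcv p hp) u₀))
      (inner_sub_convexProj_le_zero hne' (hC p hp) (hcv p hp) u₀
        (convexProj_mem hne' (hC p hp) (hcv p hp) u))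
  have hsq : ‖a - b‖ ^ 2 ≤ δ * (‖u₀ - a‖ + ‖u₀ - b‖) :=
    norm_sub_sq_le_of_inner_le_zero
      (inner_sub_convexProj_le_zero hne' (hC p hp) (hcv p hp) u₀ ha'Φ)
      (inner_sub_convexProj_le_zero hne (hC p₀ hp₀) (hcv p₀ hp₀) u₀ hb'Φ) ha' hb'
  have hfar : ‖u₀ - a‖ ≤ ‖u₀ - b‖ + δ :=
    calc ‖u₀ - a‖ ≤ ‖u₀ - a'‖ := norm_sub_convexProj_le hne' (hC p hp) (hcv p hp) u₀ ha'Φ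
      _ ≤ ‖u₀ - b‖ + ‖b - a'‖ := norm_sub_le_norm_sub_add_norm_sub _ _ _
      _ ≤ ‖u₀ - b‖ + δ := by linarith
  have hab : ‖a - b‖ ≤ √(δ * (2 * ‖u₀ - b‖ + δ)) :=
    Real.le_sqrt_of_sq_le (hsq.trans (mul_le_mul_of_nonneg_left (by linarith) hδ))
  calc ‖convexProj (Φ p) u - b‖ ≤ ‖convexProj (Φ p) u - a‖ + ‖a - b‖ :=
        norm_sub_le_norm_sub_add_norm_sub _ _ _
    _ ≤ _ := add_le_add hnonexp hab

theorem HausdorffLipschitzOn.continuousOn_convexProj (hΦ : HausdorffLipschitzOn Φ L S)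
    (hne : ∀ p ∈ S, (Φ p).Nonempty) (hC : ∀ p ∈ S, IsComplete (Φ p))
    (hcv : ∀ p ∈ S, Convex ℝ (Φ p)) :
    ContinuousOn (fun z : X × E => convexProj (Φ z.1) z.2) (S ×ˢ univ) := by
  rintro ⟨p₀, u₀⟩ ⟨hp₀, -⟩
  set D := ‖u₀ - convexProj (Φ p₀) u₀‖
  let g : X × E → ℝ := fun z => ‖z.2 - u₀‖ + √(L * dist z.1 p₀ * (2 * D + L * dist z.1 p₀))
  have hg : Tendsto g (𝓝[S ×ˢ univ] (p₀, u₀)) (𝓝 0) := by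
    have : Continuous g := by fun_prop
    simpa [g] using (this.continuousWithinAt (s := S ×ˢ univ) (x := (p₀, u₀))).tendsto
  refine tendsto_iff_norm_sub_tendsto_zero.2 (squeeze_zero' (Eventually.of_forall fun _ =>
    norm_nonneg _) ?_ hg)
  filter_upwards [self_mem_nhdsWithin] with z hz
  exact hΦ.norm_convexProj_sub_le hC hcv hz.1 hp₀ (hne p₀ hp₀) z.2 u₀

theorem HausdorffLipschitzOn.norm_convexProj_sub_self_le (hΦ : HausdorffLipschitzOn Φ L S)
    {p q : X} (hp : p ∈ S) (hq : q ∈ S) (hC : IsComplete (Φ q)) (hcv : Convex ℝ (Φ q)) {a : E}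
    (ha : a ∈ Φ p) : ‖convexProj (Φ q) a - a‖ ≤ L * dist p q := by
  obtain ⟨b, hb, hab⟩ := hΦ p hp q hq a ha
  rw [norm_sub_rev]
  exact (norm_sub_convexProj_le ⟨b, hb⟩ hC hcv a hb).trans hab

end ProjectionContinuity

theorem exists_tendstoUniformlyOn_of_dist_le_geometric {α β : Type*} [PseudoMetricSpace β]
    [CompleteSpace β] {f : ℕ → α → β} {S : Set α} {C r : ℝ} (hr₀ : 0 ≤ r) (hr : r < 1)
    (hf : ∀ k, ∀ s ∈ S, dist (f k s) (f (k + 1) s) ≤ C * r ^ k) :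
    ∃ g : α → β, TendstoUniformlyOn f g atTop S ∧
      ∀ k, ∀ s ∈ S, dist (f k s) (g s) ≤ C * r ^ k / (1 - r) := by
  have hlim : ∀ s, ∃ b, s ∈ S → Tendsto (fun k => f k s) atTop (𝓝 b) := fun s => by
    by_cases hs : s ∈ S
    · obtain ⟨b, hb⟩ := cauchySeq_tendsto_of_complete
        (cauchySeq_of_le_geometric r C hr (hf · s hs))
      exact ⟨b, fun _ => hb⟩
    · exact ⟨f 0 s, fun h => absurd h hs⟩
  choose g hg using hlim
  have hdist : ∀ k, ∀ s ∈ S, dist (f k s) (g s) ≤ C * r ^ k / (1 - r) := fun k s hs =>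
    dist_le_of_le_geometric_of_tendsto r C hr (hf · s hs) (hg s hs) k
  refine ⟨g, Metric.tendstoUniformlyOn_iff.2 fun ε hε => ?_, hdist⟩
  have hbound : Tendsto (fun k => C * r ^ k / (1 - r)) atTop (𝓝 0) := by
    simpa using ((tendsto_pow_atTop_nhds_zero_of_lt_one hr₀ hr).const_mul C).div_const (1 - r)
  filter_upwards [hbound.eventually (gt_mem_nhds hε)] with k hk s hs
  rw [dist_comm]
  exact (hdist k s hs).trans_lt hk

section IntervalIntegral

variable {E : Type*} [NormedAddCommGroup E] {t s c : ℝ} {g w w₁ w₂ : ℝ → E}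

theorem ContinuousOn.intervalIntegrable_of_mem_Icc (hw : ContinuousOn w (Icc 0 t))
    {a b : ℝ} (ha : a ∈ Icc 0 t) (hb : b ∈ Icc 0 t) : IntervalIntegrable w volume a b :=
  (hw.mono (uIcc_subset_Icc ha hb)).intervalIntegrable

variable [NormedSpace ℝ E]

theorem norm_integral_le_mul_of_forall_mem_Icc (hg : ∀ u ∈ Icc 0 t, ‖g u‖ ≤ c)
    (hs : s ∈ Icc 0 t) : ‖∫ u in s..t, g u‖ ≤ c * t := by
  have hc : 0 ≤ c := (norm_nonneg _).trans (hg s hs)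
  calc ‖∫ u in s..t, g u‖ ≤ c * |t - s| :=
        intervalIntegral.norm_integral_le_of_norm_le_const fun u hu =>
          hg u (uIoc_subset_uIcc.trans (uIcc_subset_Icc hs ⟨hs.1.trans hs.2, le_rfl⟩) hu)
    _ ≤ c * t := by
        rw [abs_of_nonneg (sub_nonneg.2 hs.2)]
        exact mul_le_mul_of_nonneg_left (by linarith [hs.1]) hc

theorem norm_integral_sub_integral_le (hw₁ : ContinuousOn w₁ (Icc 0 t))
    (hw₂ : ContinuousOn w₂ (Icc 0 t)) (h : ∀ u ∈ Icc 0 t, ‖w₁ u - w₂ u‖ ≤ c)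
    (hs : s ∈ Icc 0 t) : ‖(∫ u in s..t, w₁ u) - ∫ u in s..t, w₂ u‖ ≤ c * t := by
  have ht : t ∈ Icc 0 t := ⟨hs.1.trans hs.2, le_rfl⟩
  rw [← intervalIntegral.integral_sub (hw₁.intervalIntegrable_of_mem_Icc hs ht)
    (hw₂.intervalIntegrable_of_mem_Icc hs ht)]
  exact norm_integral_le_mul_of_forall_mem_Icc h hs

theorem ContinuousOn.continuousOn_integral_left (ht : 0 ≤ t) (hw : ContinuousOn w (Icc 0 t)) :
    ContinuousOn (fun s => ∫ u in s..t, w u) (Icc 0 t) := by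
  have := intervalIntegral.continuousOn_primitive_interval_left (μ := volume)
    (hw.integrableOn_Icc.mono_set (uIcc_of_le ht).le)
  rwa [uIcc_of_le ht] at this

theorem sub_integral_mem_closedBall {x₀ : E} {M R : ℝ} (hw : ∀ u ∈ Icc 0 t, ‖w u‖ ≤ M)
    (htM : t * M ≤ R) (hs : s ∈ Icc 0 t) : x₀ - ∫ u in s..t, w u ∈ closedBall x₀ R := by
  rw [mem_closedBall, dist_eq_norm, sub_sub_cancel_left, norm_neg]
  linarith [norm_integral_le_mul_of_forall_mem_Icc hw hs]

end IntervalIntegral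

section Filippov

variable {E : Type*} [NormedAddCommGroup E] [InnerProductSpace ℝ E]
  {Φ : E → Set E} {x₀ v : E} {L M R t : ℝ}

/-- Filippov's iterates for the backward problem `ẋ ∈ Φ x`, `x t = x₀`. -/
noncomputable def filippovIter (Φ : E → Set E) (x₀ v : E) (t : ℝ) : ℕ → ℝ → E
  | 0 => fun _ => v
  | k + 1 => fun s =>
      convexProj (Φ (x₀ - ∫ u in s..t, filippovIter Φ x₀ v t k u)) (filippovIter Φ x₀ v t k s)

theorem filippovIter_continuousOn_and_norm_le (hR : 0 ≤ R)
    (hC : ∀ p ∈ closedBall x₀ R, IsComplete (Φ p)) (hcv : ∀ p ∈ closedBall x₀ R, Convex ℝ (Φ p))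
    (hΦ : HausdorffLipschitzOn Φ L (closedBall x₀ R))
    (hM : ∀ p ∈ closedBall x₀ R, ∀ a ∈ Φ p, ‖a‖ ≤ M) (hv : v ∈ Φ x₀) (ht : 0 ≤ t)
    (htM : t * M ≤ R) (k : ℕ) :
    ContinuousOn (filippovIter Φ x₀ v t k) (Icc 0 t) ∧
      ∀ s ∈ Icc 0 t, ‖filippovIter Φ x₀ v t k s‖ ≤ M := by
  have hx₀ : x₀ ∈ closedBall x₀ R := mem_closedBall_self hR
  have hne : ∀ p ∈ closedBall x₀ R, (Φ p).Nonempty := fun p hp => hΦ.nonempty hx₀ hp ⟨v, hv⟩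
  induction k with
  | zero => exact ⟨continuousOn_const, fun _ _ => hM x₀ hx₀ v hv⟩
  | succ k ih =>
    obtain ⟨hcont, hbound⟩ := ih
    have hball : MapsTo (fun s => x₀ - ∫ u in s..t, filippovIter Φ x₀ v t k u) (Icc 0 t)
        (closedBall x₀ R) := fun s hs => sub_integral_mem_closedBall hbound htM hs
    refine ⟨(hΦ.continuousOn_convexProj hne hC hcv).comp
      ((continuousOn_const.sub (hcont.continuousOn_integral_left ht)).prodMk hcont)
      fun s hs => ⟨hball hs, mem_univ _⟩, fun s hs => hM _ (hball hs) _ ?_⟩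
    exact convexProj_mem (hne _ (hball hs)) (hC _ (hball hs)) (hcv _ (hball hs)) _

theorem norm_filippovIter_succ_sub_le (hR : 0 ≤ R) (hL : 0 ≤ L)
    (hC : ∀ p ∈ closedBall x₀ R, IsComplete (Φ p)) (hcv : ∀ p ∈ closedBall x₀ R, Convex ℝ (Φ p))
    (hΦ : HausdorffLipschitzOn Φ L (closedBall x₀ R))
    (hM : ∀ p ∈ closedBall x₀ R, ∀ a ∈ Φ p, ‖a‖ ≤ M) (hv : v ∈ Φ x₀) (ht : 0 ≤ t)
    (htM : t * M ≤ R) (hLt : L * t ≤ 1 / 2) (k : ℕ) :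
    ∀ s ∈ Icc 0 t,
      ‖filippovIter Φ x₀ v t (k + 1) s - filippovIter Φ x₀ v t k s‖ ≤ L * t * M * (1 / 2) ^ k := by
  have hiter := filippovIter_continuousOn_and_norm_le hR hC hcv hΦ hM hv ht htM
  have hball : ∀ j, ∀ s ∈ Icc 0 t,
      x₀ - ∫ u in s..t, filippovIter Φ x₀ v t j u ∈ closedBall x₀ R := fun j s hs =>
    sub_integral_mem_closedBall (hiter j).2 htM hs
  have hstep : ∀ j, ∀ s ∈ Icc 0 t, ∀ p ∈ closedBall x₀ R,
      filippovIter Φ x₀ v t j s ∈ Φ p →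
      ‖filippovIter Φ x₀ v t (j + 1) s - filippovIter Φ x₀ v t j s‖ ≤
        L * dist p (x₀ - ∫ u in s..t, filippovIter Φ x₀ v t j u) := fun j s hs p hp hmem =>
    hΦ.norm_convexProj_sub_self_le hp (hball j s hs) (hC _ (hball j s hs))
      (hcv _ (hball j s hs)) hmem
  induction k with
  | zero =>
    intro s hs
    refine (hstep 0 s hs x₀ (mem_closedBall_self hR) hv).trans ?_
    rw [dist_eq_norm, sub_sub_cancel, pow_zero, mul_one, mul_assoc, mul_comm t M]
    exact mul_le_mul_of_nonneg_left (norm_integral_le_mul_of_forall_mem_Icc (hiter 0).2 hs) hL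
  | succ k ih =>
    intro s hs
    have hmem : filippovIter Φ x₀ v t (k + 1) s ∈ Φ (x₀ - ∫ u in s..t, filippovIter Φ x₀ v t k u) :=
      convexProj_mem (hΦ.nonempty (mem_closedBall_self hR) (hball k s hs) ⟨v, hv⟩)
        (hC _ (hball k s hs)) (hcv _ (hball k s hs)) _
    have hq : 0 ≤ L * t * M * (1 / 2) ^ k := (norm_nonneg _).trans (ih s hs)
    have hdist : dist (x₀ - ∫ u in s..t, filippovIter Φ x₀ v t k u)
        (x₀ - ∫ u in s..t, filippovIter Φ x₀ v t (k + 1) u) ≤ L * t * M * (1 / 2) ^ k * t := by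
      rw [dist_eq_norm, sub_sub_sub_cancel_left]
      exact norm_integral_sub_integral_le (hiter (k + 1)).1 (hiter k).1 ih hs
    calc _ ≤ L * (L * t * M * (1 / 2) ^ k * t) :=
          (hstep (k + 1) s hs _ (hball k s hs) hmem).trans
            (mul_le_mul_of_nonneg_left hdist hL)
      _ = L * t * (L * t * M * (1 / 2) ^ k) := by ring
      _ ≤ 1 / 2 * (L * t * M * (1 / 2) ^ k) := mul_le_mul_of_nonneg_right hLt hq
      _ = L * t * M * (1 / 2) ^ (k + 1) := by ring

variable [CompleteSpace E]

/-- Filippov's theorem, backward from `x₀`: `s ↦ x₀ - ∫ₛᵗ w` is a trajectory of `Φ` ending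
at `x₀`. -/
theorem exists_filippov_velocity (hR : 0 ≤ R) (hL : 0 ≤ L)
    (hC : ∀ p ∈ closedBall x₀ R, IsComplete (Φ p)) (hcv : ∀ p ∈ closedBall x₀ R, Convex ℝ (Φ p))
    (hΦ : HausdorffLipschitzOn Φ L (closedBall x₀ R))
    (hM : ∀ p ∈ closedBall x₀ R, ∀ a ∈ Φ p, ‖a‖ ≤ M) (hv : v ∈ Φ x₀) (ht : 0 ≤ t)
    (htM : t * M ≤ R) (hLt : L * t ≤ 1 / 2) :
    ∃ w : ℝ → E, ContinuousOn w (Icc 0 t) ∧ (∀ s ∈ Icc 0 t, w s ∈ Φ (x₀ - ∫ u in s..t, w u)) ∧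
      ∀ s ∈ Icc 0 t, ‖w s - v‖ ≤ 2 * L * t * M := by
  set W := filippovIter Φ x₀ v t
  have hiter := filippovIter_continuousOn_and_norm_le hR hC hcv hΦ hM hv ht htM
  have hball : ∀ k, ∀ s ∈ Icc 0 t, x₀ - ∫ u in s..t, W k u ∈ closedBall x₀ R := fun k s hs =>
    sub_integral_mem_closedBall (hiter k).2 htM hs
  obtain ⟨w, hunif, hdist⟩ := exists_tendstoUniformlyOn_of_dist_le_geometric (f := W)
    (S := Icc 0 t) (C := L * t * M) (r := 1 / 2) (by norm_num) (by norm_num) fun k s hs => by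
      rw [dist_comm, dist_eq_norm]
      exact norm_filippovIter_succ_sub_le hR hL hC hcv hΦ hM hv ht htM hLt k s hs
  have hcont : ContinuousOn w (Icc 0 t) :=
    hunif.continuousOn (Frequently.of_forall fun k => (hiter k).1)
  refine ⟨w, hcont, fun s hs => ?_, fun s hs => ?_⟩
  · have hsub : uIcc s t ⊆ Icc 0 t := uIcc_subset_Icc hs ⟨ht, le_rfl⟩
    have hpos : Tendsto (fun k => x₀ - ∫ u in s..t, W k u) atTop
        (𝓝 (x₀ - ∫ u in s..t, w u)) :=
      ((hunif.mono hsub).tendsto_intervalIntegral_of_continuousOn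
        (Eventually.of_forall fun k => (hiter k).1.mono hsub)).const_sub x₀
    have hvel : Tendsto (fun k => W (k + 1) s) atTop (𝓝 (w s)) :=
      (hunif.tendsto_at hs).comp (tendsto_add_atTop_nat 1)
    have hlim_ball := isClosed_closedBall.mem_of_tendsto hpos
      (Eventually.of_forall fun k => hball k s hs)
    refine hΦ.mem_of_tendsto hpos hvel (fun k => hball k s hs) hlim_ball (fun k => ?_)
      (hC _ hlim_ball).isClosed
    exact convexProj_mem (hΦ.nonempty (mem_closedBall_self hR) (hball k s hs) ⟨v, hv⟩)
      (hC _ (hball k s hs)) (hcv _ (hball k s hs)) _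
  · have := hdist 0 s hs
    rw [dist_comm, dist_eq_norm] at this
    convert this using 1
    · rfl
    · ring

end Filippov

theorem le_of_forall_mem_Ioo_le {f : ℝ → ℝ} {a r : ℝ} (hf : ContinuousWithinAt f (Ioi 0) 0)
    (hr : 0 < r) (h : ∀ η ∈ Ioo 0 r, a ≤ f η) : a ≤ f 0 :=
  ge_of_tendsto hf (Filter.mem_of_superset (Ioo_mem_nhdsGT hr) h)

theorem le_sq_add_sq_div {d β r : ℝ} (hr : 0 < r) (hd : 0 ≤ d) (h : r ≤ d ∨ r ≤ β) :
    d ≤ (d ^ 2 + β ^ 2) / r := by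
  rw [le_div_iff₀ hr]
  rcases h with h | h
  · nlinarith [sq_nonneg β]
  · rcases le_total r d with h' | h'
    · nlinarith [sq_nonneg β]
    · nlinarith [sq_nonneg d]

/-- First-exit-time argument: while the curve stays in the ball its speed is at most `M`, so by
`hR` it cannot reach the boundary. -/
theorem norm_sub_le_add_mul_of_eq_add_integral {E : Type*} [NormedAddCommGroup E] [NormedSpace ℝ E]
    {x w : ℝ → E} {x₀ y : E} {t M R : ℝ} (hM : 0 ≤ M) (hw : IntervalIntegrable w volume 0 t)
    (hx : ∀ s ∈ Icc 0 t, x s = y + ∫ u in 0..s, w u)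
    (hbound : ∀ᵐ s ∂volume.restrict (Ioc 0 t), x s ∈ ball x₀ R → ‖w s‖ ≤ M)
    (hR : ‖y - x₀‖ + M * t < R) : ∀ s ∈ Icc 0 t, ‖x s - x₀‖ ≤ ‖y - x₀‖ + M * s := by
  have hbound' : ∀ᵐ s, s ∈ Ioc 0 t → x s ∈ ball x₀ R → ‖w s‖ ≤ M :=
    (ae_restrict_iff' measurableSet_Ioc).1 hbound
  have hstay : ∀ s ∈ Icc 0 t, (∀ u ∈ Ico 0 s, x u ∈ ball x₀ R) →
      ‖x s - x₀‖ ≤ ‖y - x₀‖ + M * s := by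
    intro s hs hin
    have hint : ‖∫ u in 0..s, w u‖ ≤ ∫ _ in 0..s, M := by
      refine intervalIntegral.norm_integral_le_of_norm_le hs.1 ?_ intervalIntegrable_const
      filter_upwards [hbound', compl_mem_ae_iff.2 (measure_singleton s)] with u hu hus hmem
      exact hu ⟨hmem.1, hmem.2.trans hs.2⟩ (hin u ⟨hmem.1.le, lt_of_le_of_ne hmem.2 hus⟩)
    rw [intervalIntegral.integral_const, smul_eq_mul, sub_zero] at hint
    calc ‖x s - x₀‖ = ‖(y - x₀) + ∫ u in 0..s, w u‖ := by rw [hx s hs]; abel_nf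
      _ ≤ ‖y - x₀‖ + M * s := (norm_add_le _ _).trans (by linarith)
  intro s hs
  refine hstay s hs fun u hu => ?_
  by_contra hout
  set A := Icc 0 t ∩ (fun u => ‖x u - x₀‖) ⁻¹' Ici R
  have ht : 0 ≤ t := hs.1.trans hs.2
  have hxc : ContinuousOn x (Icc 0 t) := by
    have := intervalIntegral.continuousOn_primitive_interval' hw left_mem_uIcc
    rw [uIcc_of_le ht] at this
    exact (continuousOn_const.add this).congr hx
  have hA : IsClosed A :=
    (hxc.sub continuousOn_const).norm.preimage_isClosed_of_isClosed isClosed_Icc isClosed_Ici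
  have huA : u ∈ A := ⟨⟨hu.1, hu.2.le.trans hs.2⟩, by simpa [dist_eq_norm] using hout⟩
  have hbdd : BddBelow A := ⟨0, fun v hv => hv.1.1⟩
  have hfirst := hA.csInf_mem ⟨u, huA⟩ hbdd
  have hexit := hstay (sInf A) hfirst.1 fun v hv => by
    by_contra hv'
    exact (csInf_le hbdd ⟨⟨hv.1, hv.2.le.trans hfirst.1.2⟩, by simpa [dist_eq_norm] using hv'⟩
      |>.not_gt hv.2)
  have hfar : R ≤ ‖x (sInf A) - x₀‖ := hfirst.2
  nlinarith [mul_le_mul_of_nonneg_left hfirst.1.2 hM]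

section MinTime

variable {n : ℕ} {F : EuclideanSpace ℝ (Fin n) → Set (EuclideanSpace ℝ (Fin n))}
  {K : Set (EuclideanSpace ℝ (Fin n))} {x₀ y ζ v : EuclideanSpace ℝ (Fin n)}

theorem zero_mem_reachTimes (hx₀ : x₀ ∈ K) : (0 : ℝ) ∈ reachTimes F K x₀ := by
  refine ⟨le_rfl, fun _ => x₀, ⟨rfl, fun _ => 0, intervalIntegrable_const, ?_, ?_⟩, hx₀⟩
  · simp
  · intro s hs
    simp [le_antisymm hs.2 hs.1]

theorem minTime_eq_zero (hx₀ : x₀ ∈ K) : minTime F K x₀ = 0 := by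
  have h : ENNReal.ofReal 0 ∈ ENNReal.ofReal '' reachTimes F K x₀ :=
    ⟨0, zero_mem_reachTimes hx₀, rfl⟩
  simpa [minTime] using sInf_le h

theorem memEpi_of_mem_reachTimes {t : ℝ} (ht : t ∈ reachTimes F K y) : memEpi F K y t :=
  ⟨ht.1, sInf_le ⟨t, ht, rfl⟩⟩

theorem exists_mem_reachTimes_lt {β η : ℝ} (hy : memEpi F K y β) (hη : 0 < η) :
    ∃ t ∈ reachTimes F K y, t < β + η := by
  have hlt : minTime F K y < ENNReal.ofReal (β + η) :=
    hy.2.trans_lt ((ENNReal.ofReal_lt_ofReal_iff (by linarith [hy.1])).2 (by linarith))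
  obtain ⟨_, ⟨t, ht, rfl⟩, htlt⟩ := sInf_lt_iff.1 hlt
  exact ⟨t, ht, (ENNReal.ofReal_lt_ofReal_iff (by linarith [hy.1])).1 htlt⟩

theorem isProxNormalEpi_zero_iff (hx₀ : x₀ ∈ K) :
    IsProxNormalEpi F K x₀ ζ 0 ↔
      ∃ σ, 0 ≤ σ ∧ ∀ y β, memEpi F K y β → ⟪ζ, y - x₀⟫ ≤ σ * (‖y - x₀‖ ^ 2 + β ^ 2) := by
  simp [IsProxNormalEpi, minTime_eq_zero hx₀]

theorem minHam_le_inner {x : EuclideanSpace ℝ (Fin n)} (hcpt : IsCompact (F x)) (hv : v ∈ F x) :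
    minHam F x ζ ≤ ⟪v, ζ⟫ :=
  csInf_le (hcpt.image (continuous_id.inner continuous_const)).bddBelow ⟨v, hv, rfl⟩

theorem minHam_sub_le_inner {L : ℝ} {S : Set (EuclideanSpace ℝ (Fin n))}
    (hΦ : HausdorffLipschitzOn F L S) {p q a : EuclideanSpace ℝ (Fin n)} (hp : p ∈ S)
    (hq : q ∈ S) (hcpt : IsCompact (F p)) (ha : a ∈ F q) :
    minHam F p ζ - L * dist q p * ‖ζ‖ ≤ ⟪a, ζ⟫ := by
  obtain ⟨b, hb, hab⟩ := hΦ q hq p hp a ha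
  have h₁ := minHam_le_inner (ζ := ζ) hcpt hb
  have h₂ : ⟪b - a, ζ⟫ ≤ ‖b - a‖ * ‖ζ‖ := real_inner_le_norm _ _
  rw [inner_sub_left, norm_sub_rev] at h₂
  nlinarith [norm_nonneg ζ]

theorem AssumptionF.exists_hausdorffLipschitzOn (hF : AssumptionF F)
    (x₀ : EuclideanSpace ℝ (Fin n)) (R : ℝ) :
    ∃ L > 0, HausdorffLipschitzOn F L (closedBall x₀ R) := by
  obtain ⟨L, hL, hLip⟩ := hF.locLip _ (isCompact_closedBall x₀ R)
  exact ⟨L, hL, fun p hp q hq a ha => by simpa [dist_eq_norm] using hLip p hp q hq a ha⟩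

theorem AssumptionF.exists_norm_le (hF : AssumptionF F) (x₀ : EuclideanSpace ℝ (Fin n))
    (R : ℝ) : ∃ M > 0, ∀ p ∈ closedBall x₀ R, ∀ a ∈ F p, ‖a‖ ≤ M := by
  obtain ⟨γ, hγ, hgrowth⟩ := hF.growth
  refine ⟨γ * (1 + ‖x₀‖ + |R|), by positivity, fun p hp a ha => (hgrowth p a ha).trans ?_⟩
  have : ‖p‖ ≤ ‖x₀‖ + |R| := by
    have := norm_le_of_mem_closedBall hp
    linarith [le_abs_self R]
  nlinarith

end MinTime

section Subdifferential

variable {n : ℕ} {F : EuclideanSpace ℝ (Fin n) → Set (EuclideanSpace ℝ (Fin n))}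
  {K : Set (EuclideanSpace ℝ (Fin n))} {x₀ y ζ v : EuclideanSpace ℝ (Fin n)}

theorem isProxNormal_of_mem_horizSubdiff (hx₀ : x₀ ∈ K) (hζ : ζ ∈ horizSubdiff F K x₀) :
    IsProxNormal K x₀ ζ := by
  obtain ⟨σ, hσ, hprox⟩ := (isProxNormalEpi_zero_iff hx₀).1 hζ
  refine ⟨σ, hσ, fun z hz => ?_⟩
  simpa using hprox z 0 ⟨le_rfl, by simp [minTime_eq_zero hz]⟩

theorem AssumptionF.exists_mem_reachTimes_sub_smul_le (hF : AssumptionF F) (hx₀ : x₀ ∈ K)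
    (hv : v ∈ F x₀) :
    ∃ C t₀, 0 < t₀ ∧ ∀ t ∈ Ioo 0 t₀, ∃ y, t ∈ reachTimes F K y ∧ ‖y - x₀ + t • v‖ ≤ C * t ^ 2 := by
  obtain ⟨L, hL, hΦ⟩ := hF.exists_hausdorffLipschitzOn x₀ 1
  obtain ⟨M, hM, hMb⟩ := hF.exists_norm_le x₀ 1
  refine ⟨2 * L * M, min (1 / M) (1 / (2 * L)), by positivity, fun t ht => ?_⟩
  have htM : t * M ≤ 1 := by
    have := ht.2.le.trans (min_le_left _ _)
    rwa [le_div_iff₀ hM] at this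
  have hLt : L * t ≤ 1 / 2 := by
    have := ht.2.le.trans (min_le_right _ _)
    rw [le_div_iff₀ (by positivity)] at this
    linarith
  obtain ⟨w, hw, hmem, hwv⟩ := exists_filippov_velocity zero_le_one hL.le
    (fun p _ => (hF.compact p).isComplete) (fun p _ => hF.convex p) hΦ hMb hv ht.1.le htM hLt
  have hIcc : ∀ s ∈ Icc 0 t, IntervalIntegrable w volume 0 s := fun s hs =>
    hw.intervalIntegrable_of_mem_Icc ⟨le_rfl, ht.1.le⟩ hs
  have htt : t ∈ Icc 0 t := ⟨ht.1.le, le_rfl⟩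
  refine ⟨x₀ - ∫ u in 0..t, w u, ⟨ht.1.le, fun s => x₀ - ∫ u in s..t, w u,
    ⟨rfl, w, hIcc t htt, ae_restrict_of_forall_mem measurableSet_Ioc fun s hs =>
      hmem s (Ioc_subset_Icc_self hs), fun s hs => ?_⟩, by simpa using hx₀⟩, ?_⟩
  · show x₀ - ∫ u in s..t, w u = _
    rw [← intervalIntegral.integral_interval_sub_left (hIcc t htt) (hIcc s hs)]
    abel
  · have hsub : (x₀ - ∫ u in 0..t, w u) - x₀ + t • v = ∫ u in 0..t, (v - w u) := by
      rw [intervalIntegral.integral_sub intervalIntegrable_const (hIcc t htt),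
        intervalIntegral.integral_const, sub_zero]
      abel
    rw [hsub]
    calc ‖∫ u in 0..t, (v - w u)‖ ≤ 2 * L * t * M * t :=
          norm_integral_le_mul_of_forall_mem_Icc (fun s hs => norm_sub_rev v (w s) ▸ hwv s hs)
            ⟨le_rfl, ht.1.le⟩
      _ = 2 * L * M * t ^ 2 := by ring

theorem minHam_nonneg_of_mem_horizSubdiff (hF : AssumptionF F) (hx₀ : x₀ ∈ K)
    (hζ : ζ ∈ horizSubdiff F K x₀) : 0 ≤ minHam F x₀ ζ := by
  obtain ⟨σ, hσ, hprox⟩ := (isProxNormalEpi_zero_iff hx₀).1 hζ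
  refine le_csInf ((hF.nonempty x₀).image _) ?_
  rintro _ ⟨v, hv, rfl⟩
  obtain ⟨C, t₀, ht₀, hreach⟩ := hF.exists_mem_reachTimes_sub_smul_le hx₀ hv
  set B := ‖ζ‖ * C + σ * ((C + ‖v‖) ^ 2 + 1)
  suffices h : ∀ t ∈ Ioo 0 (min t₀ 1), -⟪v, ζ⟫ ≤ B * t by
    have := le_of_forall_mem_Ioo_le (f := fun t => B * t) (by fun_prop) (by positivity) h
    simp only [mul_zero] at this
    linarith
  intro t ht
  have ht₀' : t < t₀ := ht.2.trans_le (min_le_left _ _)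
  have ht1 : t ≤ 1 := ht.2.le.trans (min_le_right _ _)
  obtain ⟨y, hy, hyv⟩ := hreach t ⟨ht.1, ht₀'⟩
  have hC : 0 ≤ C := nonneg_of_mul_nonneg_left ((norm_nonneg _).trans hyv) (by nlinarith [ht.1])
  set e := y - x₀ + t • v
  have hyx : y - x₀ = e - t • v := by simp [e]
  have hnorm : ‖y - x₀‖ ≤ t * (C + ‖v‖) := by
    rw [hyx]
    calc ‖e - t • v‖ ≤ ‖e‖ + ‖t • v‖ := norm_sub_le _ _
      _ ≤ C * t ^ 2 + t * ‖v‖ := by rw [norm_smul, Real.norm_of_nonneg ht.1.le]; linarith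
      _ ≤ t * (C + ‖v‖) := by nlinarith [mul_le_mul_of_nonneg_left ht1 (mul_nonneg hC ht.1.le)]
  have hineq := hprox y t (memEpi_of_mem_reachTimes hy)
  rw [hyx, inner_sub_right, real_inner_smul_right] at hineq
  have he : ⟪ζ, e⟫ ≥ -(‖ζ‖ * (C * t ^ 2)) := by
    have := neg_abs_le ⟪ζ, e⟫
    have := abs_real_inner_le_norm ζ e
    nlinarith [norm_nonneg ζ]
  have hsq : ‖e - t • v‖ ^ 2 ≤ (t * (C + ‖v‖)) ^ 2 :=
    pow_le_pow_left₀ (norm_nonneg _) (hyx ▸ hnorm) 2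
  have key : t * -⟪v, ζ⟫ ≤ t * (B * t) := by
    have := mul_le_mul_of_nonneg_left hsq hσ
    rw [real_inner_comm]
    simp only [B]
    linarith
  exact le_of_mul_le_mul_left key ht.1

theorem inner_le_of_mem_reachTimes {σ₀ L M R t : ℝ} (hσ₀ : 0 ≤ σ₀)
    (hK : ∀ z ∈ K, ⟪ζ, z - x₀⟫ ≤ σ₀ * ‖z - x₀‖ ^ 2) (hh : 0 ≤ minHam F x₀ ζ)
    (hcpt : IsCompact (F x₀)) (hL : 0 ≤ L) (hΦ : HausdorffLipschitzOn F L (closedBall x₀ R))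
    (hM : 0 ≤ M) (hMb : ∀ p ∈ closedBall x₀ R, ∀ a ∈ F p, ‖a‖ ≤ M)
    (ht : t ∈ reachTimes F K y) (hR : ‖y - x₀‖ + M * t < R) :
    ⟪ζ, y - x₀⟫ ≤ σ₀ * (‖y - x₀‖ + M * t) ^ 2 + L * ‖ζ‖ * t * (‖y - x₀‖ + M * t) := by
  obtain ⟨ht0, x, ⟨-, w, hw, hmem, hxeq⟩, hxK⟩ := ht
  set D := ‖y - x₀‖ + M * t
  have hbound : ∀ᵐ s ∂volume.restrict (Ioc 0 t), x s ∈ ball x₀ R → ‖w s‖ ≤ M := by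
    filter_upwards [hmem] with s hs hball
    exact hMb _ (ball_subset_closedBall hball) _ hs
  have hnear : ∀ s ∈ Icc 0 t, ‖x s - x₀‖ ≤ D := fun s hs =>
    (norm_sub_le_add_mul_of_eq_add_integral hM hw hxeq hbound hR s hs).trans
      (by nlinarith [mul_le_mul_of_nonneg_left hs.2 hM])
  have hend : ⟪ζ, x t - x₀⟫ ≤ σ₀ * D ^ 2 :=
    (hK _ hxK).trans (mul_le_mul_of_nonneg_left
      (pow_le_pow_left₀ (norm_nonneg _) (hnear t ⟨ht0, le_rfl⟩) 2) hσ₀)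
  have hvel : ∀ᵐ s ∂volume.restrict (Ioc 0 t), -(L * ‖ζ‖ * D) ≤ ⟪ζ, w s⟫ := by
    filter_upwards [hmem, ae_restrict_mem measurableSet_Ioc] with s hs hsI
    have hxs := hnear s (Ioc_subset_Icc_self hsI)
    have hball : x s ∈ closedBall x₀ R := by
      rw [mem_closedBall, dist_eq_norm]
      linarith
    have := minHam_sub_le_inner (ζ := ζ) hΦ (mem_closedBall_self
      (by linarith [norm_nonneg (y - x₀), mul_nonneg hM ht0])) hball hcpt hs
    rw [real_inner_comm, dist_eq_norm] at this
    nlinarith [mul_le_mul_of_nonneg_left hxs (mul_nonneg hL (norm_nonneg ζ))]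
  have hint : -(L * ‖ζ‖ * D) * t ≤ ⟪ζ, ∫ s in 0..t, w s⟫ := by
    have hcomm := (innerSL ℝ ζ).intervalIntegral_comp_comm hw
    simp only [innerSL_apply_apply] at hcomm
    rw [← hcomm, intervalIntegral.integral_of_le ht0]
    calc -(L * ‖ζ‖ * D) * t = ∫ _ in Ioc 0 t, -(L * ‖ζ‖ * D) := by simp [ht0, mul_comm]
      _ ≤ ∫ s in Ioc 0 t, ⟪ζ, w s⟫ :=
        setIntegral_mono_ae_restrict (integrableOn_const (by simp))
          (by simpa only [innerSL_apply_apply, IntegrableOn] using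
            (innerSL ℝ ζ).integrable_comp hw.1) hvel
  have hsplit : y - x₀ = (x t - x₀) - ∫ s in 0..t, w s := by
    rw [hxeq t ⟨ht0, le_rfl⟩]
    abel
  rw [hsplit, inner_sub_right]
  nlinarith

theorem inner_le_of_memEpi_of_lt {σ₀ L M R r β : ℝ} (hσ₀ : 0 ≤ σ₀)
    (hK : ∀ z ∈ K, ⟪ζ, z - x₀⟫ ≤ σ₀ * ‖z - x₀‖ ^ 2) (hh : 0 ≤ minHam F x₀ ζ)
    (hcpt : IsCompact (F x₀)) (hL : 0 ≤ L) (hΦ : HausdorffLipschitzOn F L (closedBall x₀ R))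
    (hM : 0 ≤ M) (hMb : ∀ p ∈ closedBall x₀ R, ∀ a ∈ F p, ‖a‖ ≤ M) (hr : r * (1 + 2 * M) ≤ R)
    (hy : memEpi F K y β) (hyr : ‖y - x₀‖ < r) (hβr : β < r) :
    ⟪ζ, y - x₀⟫ ≤ (2 * σ₀ * (1 + M ^ 2) + L * ‖ζ‖ * (1 + M)) * (‖y - x₀‖ ^ 2 + β ^ 2) := by
  set d := ‖y - x₀‖
  set C := 2 * σ₀ * (1 + M ^ 2) + L * ‖ζ‖ * (1 + M)
  have hd : 0 ≤ d := norm_nonneg _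
  have hC : 0 ≤ C := by positivity
  have hquad : ∀ t, 0 ≤ t →
      σ₀ * (d + M * t) ^ 2 + L * ‖ζ‖ * t * (d + M * t) ≤ C * (d ^ 2 + t ^ 2) := by
    intro t ht
    have h₁ : (d + M * t) ^ 2 ≤ 2 * (1 + M ^ 2) * (d ^ 2 + t ^ 2) := by
      nlinarith [sq_nonneg (d - M * t), sq_nonneg (M * d), sq_nonneg t]
    have h₂ : t * (d + M * t) ≤ (1 + M) * (d ^ 2 + t ^ 2) := by
      nlinarith [sq_nonneg (d - t), mul_nonneg hM (sq_nonneg d)]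
    nlinarith [mul_le_mul_of_nonneg_left h₁ hσ₀,
      mul_le_mul_of_nonneg_left h₂ (mul_nonneg hL (norm_nonneg ζ))]
  have hlim := le_of_forall_mem_Ioo_le (f := fun η => C * (d ^ 2 + (β + η) ^ 2)) (a := ⟪ζ, y - x₀⟫)
    (by fun_prop) (sub_pos.2 hβr) fun η hη => by
      obtain ⟨t, ht, htβ⟩ := exists_mem_reachTimes_lt hy hη.1
      have htR : d + M * t < R := by
        nlinarith [mul_le_mul_of_nonneg_left (show t ≤ 2 * r by linarith [hη.2]) hM]
      calc ⟪ζ, y - x₀⟫ ≤ σ₀ * (d + M * t) ^ 2 + L * ‖ζ‖ * t * (d + M * t) :=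
            inner_le_of_mem_reachTimes hσ₀ hK hh hcpt hL hΦ hM hMb ht htR
        _ ≤ C * (d ^ 2 + t ^ 2) := hquad t ht.1
        _ ≤ C * (d ^ 2 + (β + η) ^ 2) :=
            mul_le_mul_of_nonneg_left (add_le_add_right (pow_le_pow_left₀ ht.1 htβ.le 2) _) hC
  simpa using hlim

theorem mem_horizSubdiff_of_isProxNormal (hF : AssumptionF F) (hx₀ : x₀ ∈ K)
    (hN : IsProxNormal K x₀ ζ) (hh : 0 ≤ minHam F x₀ ζ) : ζ ∈ horizSubdiff F K x₀ := by
  obtain ⟨σ₀, hσ₀, hK⟩ := hN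
  obtain ⟨L, hL, hΦ⟩ := hF.exists_hausdorffLipschitzOn x₀ 1
  obtain ⟨M, hM, hMb⟩ := hF.exists_norm_le x₀ 1
  set C := 2 * σ₀ * (1 + M ^ 2) + L * ‖ζ‖ * (1 + M)
  set r := 1 / (2 * (M + 1))
  have hr : 0 < r := by positivity
  have hrM : r * (1 + 2 * M) ≤ 1 := by
    rw [div_mul_eq_mul_div, div_le_one (by positivity)]
    linarith
  refine (isProxNormalEpi_zero_iff hx₀).2 ⟨C + ‖ζ‖ / r, by positivity, fun y β hy => ?_⟩
  have hsq : 0 ≤ ‖y - x₀‖ ^ 2 + β ^ 2 := by positivity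
  by_cases hfar : r ≤ ‖y - x₀‖ ∨ r ≤ β
  · calc ⟪ζ, y - x₀⟫ ≤ ‖ζ‖ * ‖y - x₀‖ := real_inner_le_norm _ _
      _ ≤ ‖ζ‖ * ((‖y - x₀‖ ^ 2 + β ^ 2) / r) :=
        mul_le_mul_of_nonneg_left (le_sq_add_sq_div hr (norm_nonneg _) hfar) (norm_nonneg _)
      _ = ‖ζ‖ / r * (‖y - x₀‖ ^ 2 + β ^ 2) := by ring
      _ ≤ (C + ‖ζ‖ / r) * (‖y - x₀‖ ^ 2 + β ^ 2) :=
        mul_le_mul_of_nonneg_right (le_add_of_nonneg_left (by positivity)) hsq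
  · simp only [not_or, not_le] at hfar
    calc ⟪ζ, y - x₀⟫ ≤ C * (‖y - x₀‖ ^ 2 + β ^ 2) :=
          inner_le_of_memEpi_of_lt hσ₀ hK hh (hF.compact x₀) hL.le hΦ hM.le hMb hrM hy
            hfar.1 hfar.2
      _ ≤ (C + ‖ζ‖ / r) * (‖y - x₀‖ ^ 2 + β ^ 2) :=
          mul_le_mul_of_nonneg_right (le_add_of_nonneg_right (by positivity)) hsq

end Subdifferential

theorem horizSubdiff_eq_target_general {n : ℕ}
    (F : EuclideanSpace ℝ (Fin n) → Set (EuclideanSpace ℝ (Fin n)))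
    (K : Set (EuclideanSpace ℝ (Fin n))) (hF : AssumptionF F)
    (x₀ : EuclideanSpace ℝ (Fin n)) (hx₀ : x₀ ∈ K) :
    horizSubdiff F K x₀ = {ζ | IsProxNormal K x₀ ζ ∧ 0 ≤ minHam F x₀ ζ} := by
  ext ζ
  exact ⟨fun hζ => ⟨isProxNormal_of_mem_horizSubdiff hx₀ hζ,
      minHam_nonneg_of_mem_horizSubdiff hF hx₀ hζ⟩,
    fun ⟨hN, hh⟩ => mem_horizSubdiff_of_isProxNormal hF hx₀ hN hh⟩

/-- for `x₀` in the target, `∂^∞𝒯(x₀) = N^P_K(x₀) ∩ {ζ : h(x₀,ζ) ≥ 0}`. -/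
theorem horizSubdiff_eq_target {n : ℕ}
    (F : EuclideanSpace ℝ (Fin n) → Set (EuclideanSpace ℝ (Fin n)))
    (K : Set (EuclideanSpace ℝ (Fin n))) (hF : AssumptionF F) (hK : IsClosed K)
    (x₀ : EuclideanSpace ℝ (Fin n)) (hx₀ : x₀ ∈ K) :
    horizSubdiff F K x₀ = {ζ | IsProxNormal K x₀ ζ ∧ 0 ≤ minHam F x₀ ζ} :=
  horizSubdiff_eq_target_general F K hF x₀ hx₀
end

section
/- Assume (F). Let x₀ ∈ R \ K, where R is the reachable set, and let ζ ∈ N^P_{R(T(x₀))}(x₀), where R(r) = {y : T(y) ≤ r} is the sublevel set of the minimum time function. Then h(x₀, ζ) ≤ 0. -/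
open scoped RealInnerProductSpace ENNReal
open MeasureTheory Set

/-!
Follow a nearly optimal trajectory `x` from `x₀`: if it reaches `K` at time `T < 𝒯(x₀) + δ`,
then for `s = min δ T` the point `x s` still satisfies `𝒯(x s) ≤ T - s ≤ 𝒯(x₀)`, so the proximal
normal inequality gives `⟪ζ, x s - x₀⟫ ≤ σ ‖x s - x₀‖² = O(s²)`. Linear growth keeps
`‖x s - x₀‖ = O(s)`, and local Lipschitz continuity then puts the mean velocity
`(x s - x₀) / s` within `O(s)` of the convex set `F x₀`. Hence
`h(x₀, ζ) ≤ ⟪(x s - x₀) / s, ζ⟫ + O(s) = O(s)`, and `s ≤ δ` is arbitrarily small.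
-/

open Filter Topology

theorem Convex.inv_smul_intervalIntegral_mem {E : Type*} [NormedAddCommGroup E]
    [NormedSpace ℝ E] [CompleteSpace E] {C : Set E} (hC : Convex ℝ C) (hCc : IsClosed C)
    {v : ℝ → E} {s : ℝ} (hs : 0 < s) (hv : IntervalIntegrable v volume 0 s)
    (hvC : ∀ᵐ u ∂volume.restrict (Ioc 0 s), v u ∈ C) :
    s⁻¹ • ∫ u in (0 : ℝ)..s, v u ∈ C := by
  have hmem := hC.set_average_mem hCc (by simpa [Real.volume_Ioc] using hs)
    (by simp [Real.volume_Ioc]) hvC (hv.def'.mono_set (by rw [uIoc_of_le hs.le]))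
  rwa [← uIoc_of_le hs.le, interval_average_eq, sub_zero] at hmem

theorem minHam_le_inner_add_of_mem_cthickening {n : ℕ}
    {F : EuclideanSpace ℝ (Fin n) → Set (EuclideanSpace ℝ (Fin n))}
    {x q ζ : EuclideanSpace ℝ (Fin n)} {ρ : ℝ} (hF : IsCompact (F x)) (hρ : 0 ≤ ρ)
    (hq : q ∈ Metric.cthickening ρ (F x)) :
    minHam F x ζ ≤ ⟪q, ζ⟫ + ρ * ‖ζ‖ := by
  rw [hF.cthickening_eq_biUnion_closedBall hρ] at hq
  obtain ⟨w, hw, hqw⟩ := mem_iUnion₂.mp hq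
  have hbdd : BddBelow ((fun v => ⟪v, ζ⟫) '' F x) :=
    (hF.image (continuous_id.inner continuous_const)).bddBelow
  calc minHam F x ζ ≤ ⟪w, ζ⟫ := csInf_le hbdd (mem_image_of_mem _ hw)
    _ = ⟪q, ζ⟫ + ⟪w - q, ζ⟫ := by rw [← inner_add_left, add_sub_cancel]
    _ ≤ ⟪q, ζ⟫ + ρ * ‖ζ‖ := by
      gcongr
      exact (real_inner_le_norm _ _).trans
        (mul_le_mul_of_nonneg_right (by rwa [← dist_eq_norm']) (norm_nonneg ζ))

section Trajectory

variable {n : ℕ} {F : EuclideanSpace ℝ (Fin n) → Set (EuclideanSpace ℝ (Fin n))}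
  {x₀ : EuclideanSpace ℝ (Fin n)} {T : ℝ} {x : ℝ → EuclideanSpace ℝ (Fin n)}

theorem IsTrajectory.continuousOn (hx : IsTrajectory F x₀ T x) : ContinuousOn x (Icc 0 T) := by
  obtain ⟨-, v, hv, -, hxint⟩ := hx
  exact (continuousOn_const.add ((intervalIntegral.continuousOn_primitive_interval' hv
    left_mem_uIcc).mono Icc_subset_uIcc)).congr hxint

theorem IsTrajectory.shift (hx : IsTrajectory F x₀ T x) {s : ℝ} (hs : 0 ≤ s) (hsT : s ≤ T) :
    IsTrajectory F (x s) (T - s) (fun u => x (s + u)) := by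
  obtain ⟨-, v, hv, hvF, hxint⟩ := hx
  have hv' : ∀ {a b : ℝ}, a ∈ Icc 0 T → b ∈ Icc 0 T → IntervalIntegrable v volume a b :=
    fun ha hb => hv.mono_set (uIcc_subset_uIcc (Icc_subset_uIcc ha) (Icc_subset_uIcc hb))
  refine ⟨by simp, fun u => v (s + u), ?_, ?_, fun u hu => ?_⟩
  · simpa using (hv' ⟨hs, hsT⟩ ⟨hs.trans hsT, le_rfl⟩).comp_add_left s
  · rw [ae_restrict_iff' measurableSet_Ioc] at hvF ⊢
    have := (measurePreserving_add_left volume s).quasiMeasurePreserving.ae hvF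
    filter_upwards [this] with u hu hu'
    exact hu ⟨by linarith [hu'.1], by linarith [hu'.2]⟩
  · have hsu : s + u ∈ Icc 0 T := ⟨by linarith [hu.1], by linarith [hu.2]⟩
    beta_reduce
    rw [hxint _ hsu, hxint s ⟨hs, hsT⟩, intervalIntegral.integral_comp_add_left (fun r => v r) s,
      add_zero, ← intervalIntegral.integral_add_adjacent_intervals (hv' ⟨le_rfl, hs.trans hsT⟩
      ⟨hs, hsT⟩) (hv' ⟨hs, hsT⟩ hsu), add_assoc]

theorem IsTrajectory.inv_smul_sub_mem (hx : IsTrajectory F x₀ T x) {s : ℝ} (hs : 0 < s)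
    (hsT : s ≤ T) {C : Set (EuclideanSpace ℝ (Fin n))} (hC : Convex ℝ C) (hCc : IsClosed C)
    (hFC : ∀ u ∈ Ioc 0 s, F (x u) ⊆ C) : s⁻¹ • (x s - x₀) ∈ C := by
  obtain ⟨-, v, hv, hvF, hxint⟩ := hx
  rw [hxint s ⟨hs.le, hsT⟩, add_sub_cancel_left]
  refine hC.inv_smul_intervalIntegral_mem hCc hs
    (hv.mono_set (uIcc_subset_uIcc left_mem_uIcc (Icc_subset_uIcc ⟨hs.le, hsT⟩))) ?_
  filter_upwards [ae_restrict_of_ae_restrict_of_subset (Ioc_subset_Ioc_right hsT) hvF,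
    ae_restrict_mem measurableSet_Ioc] with u huF hu
  exact hFC u hu huF

theorem IsTrajectory.norm_sub_le_of_forall_norm_sub_le {γ : ℝ} (hγ : 0 ≤ γ)
    (hgrowth : ∀ y, ∀ w ∈ F y, ‖w‖ ≤ γ * (1 + ‖y‖)) (hx : IsTrajectory F x₀ T x) {u D : ℝ}
    (hu : u ∈ Icc 0 T) (hD : ∀ r ∈ Icc 0 u, ‖x r - x₀‖ ≤ D) :
    ‖x u - x₀‖ ≤ γ * (1 + ‖x₀‖ + D) * u := by
  obtain ⟨-, v, -, hvF, hxint⟩ := hx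
  rw [hxint u hu, add_sub_cancel_left]
  have hbound : ∀ᵐ r, r ∈ uIoc 0 u → ‖v r‖ ≤ γ * (1 + ‖x₀‖ + D) := by
    filter_upwards [(ae_restrict_iff' measurableSet_Ioc).mp hvF] with r hrF hr
    rw [uIoc_of_le hu.1] at hr
    calc ‖v r‖ ≤ γ * (1 + ‖x r‖) := hgrowth _ _ (hrF ⟨hr.1, hr.2.trans hu.2⟩)
      _ ≤ γ * (1 + ‖x₀‖ + D) := by
        have := norm_le_norm_add_norm_sub' (x r) x₀
        gcongr γ * ?_
        linarith [hD r ⟨hr.1.le, hr.2⟩]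
  simpa [abs_of_nonneg hu.1] using intervalIntegral.norm_integral_le_of_norm_le_const_ae hbound

theorem IsTrajectory.norm_sub_le_mul {γ : ℝ} (hγ : 0 ≤ γ)
    (hgrowth : ∀ y, ∀ w ∈ F y, ‖w‖ ≤ γ * (1 + ‖y‖)) (hx : IsTrajectory F x₀ T x) {r : ℝ}
    (hr : r ∈ Icc 0 T) (hsmall : γ * (2 + ‖x₀‖) * r ≤ 1 / 2) : ‖x r - x₀‖ ≤ γ * (2 + ‖x₀‖) * r := by
  obtain ⟨u, hu, hmax⟩ := isCompact_Icc.exists_isMaxOn (f := fun u => ‖x u - x₀‖)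
    (nonempty_Icc.2 hr.1) ((hx.continuousOn.mono (Icc_subset_Icc_right hr.2)).sub
      continuousOn_const).norm
  have hD := hx.norm_sub_le_of_forall_norm_sub_le hγ hgrowth ⟨hu.1, hu.2.trans hr.2⟩
    fun r' hr' => hmax (Icc_subset_Icc_right hu.2 hr')
  -- `u` maximises the deviation `D = ‖x u - x₀‖` on `[0, r]`, and `D ≤ γ r (1 + ‖x₀‖ + D)`
  -- forces `D ≤ 1`
  have hD1 : ‖x u - x₀‖ ≤ 1 := by
    have : γ * (1 + ‖x₀‖ + ‖x u - x₀‖) * u ≤ γ * (1 + ‖x₀‖ + ‖x u - x₀‖) * r := by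
      gcongr; exact hu.2
    have hγr : 0 ≤ γ * r := mul_nonneg hγ hr.1
    by_contra! h
    nlinarith [mul_pos (sub_pos.2 h) (by nlinarith [norm_nonneg x₀] : 0 < 1 - γ * r),
      mul_nonneg hγr (norm_nonneg x₀)]
  calc ‖x r - x₀‖ ≤ γ * (1 + ‖x₀‖ + 1) * r :=
        hx.norm_sub_le_of_forall_norm_sub_le hγ hgrowth hr fun r' hr' => (hmax hr').trans hD1
    _ = γ * (2 + ‖x₀‖) * r := by ring

theorem minTime_le_of_isTrajectory {K : Set (EuclideanSpace ℝ (Fin n))}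
    (hx : IsTrajectory F x₀ T x) (hT : 0 ≤ T) (hxK : x T ∈ K) :
    minTime F K x₀ ≤ ENNReal.ofReal T :=
  sInf_le (mem_image_of_mem _ ⟨hT, x, hx, hxK⟩)

theorem exists_isTrajectory_of_minTime_lt {K : Set (EuclideanSpace ℝ (Fin n))} {r : ℝ}
    (h : minTime F K x₀ < ENNReal.ofReal r) :
    ∃ T x, 0 ≤ T ∧ T < r ∧ IsTrajectory F x₀ T x ∧ x T ∈ K := by
  obtain ⟨_, ⟨T, ⟨hT, x, hx, hxK⟩, rfl⟩, hlt⟩ := sInf_lt_iff.mp h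
  exact ⟨T, x, hT, (ENNReal.ofReal_lt_ofReal_iff'.mp hlt).1, hx, hxK⟩

end Trajectory

theorem exists_isTrajectory_mem_sublevel {n : ℕ}
    {F : EuclideanSpace ℝ (Fin n) → Set (EuclideanSpace ℝ (Fin n))}
    {K : Set (EuclideanSpace ℝ (Fin n))} {x₀ : EuclideanSpace ℝ (Fin n)}
    (hx₀R : minTime F K x₀ ≠ ⊤) (hx₀K : x₀ ∉ K) {δ : ℝ} (hδ : 0 < δ) :
    ∃ T x s, IsTrajectory F x₀ T x ∧ 0 < s ∧ s ≤ δ ∧ s ≤ T ∧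
      x s ∈ sublevel F K (minTime F K x₀).toReal := by
  set τ₀ := (minTime F K x₀).toReal
  have hlt : minTime F K x₀ < ENNReal.ofReal (τ₀ + δ) := by
    rw [← ENNReal.ofReal_toReal hx₀R]
    exact (ENNReal.ofReal_lt_ofReal_iff (by positivity)).2 (by linarith)
  obtain ⟨T, x, hT, hTlt, hx, hxK⟩ := exists_isTrajectory_of_minTime_lt hlt
  have hTpos : 0 < T := hT.lt_of_ne (by rintro rfl; exact hx₀K (hx.1 ▸ hxK))
  obtain ⟨s, hs, hsδ, hsT, hTs⟩ : ∃ s, 0 < s ∧ s ≤ δ ∧ s ≤ T ∧ T - s ≤ τ₀ := by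
    rcases le_total δ T with h | h
    · exact ⟨δ, hδ, le_rfl, h, by linarith⟩
    · exact ⟨T, hTpos, h, le_rfl, by simp [τ₀]⟩
  have hxK' : x (s + (T - s)) ∈ K := by rwa [add_sub_cancel]
  refine ⟨T, x, s, hx, hs, hsδ, hsT, ?_⟩
  exact (minTime_le_of_isTrajectory (hx.shift hs.le hsT) (sub_nonneg.2 hsT) hxK').trans
    (ENNReal.ofReal_le_ofReal hTs)

theorem minHam_le_of_isTrajectory {n : ℕ}
    {F : EuclideanSpace ℝ (Fin n) → Set (EuclideanSpace ℝ (Fin n))}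
    {x₀ ζ : EuclideanSpace ℝ (Fin n)} {T s γ L σ : ℝ} {x : ℝ → EuclideanSpace ℝ (Fin n)}
    (hconv : Convex ℝ (F x₀)) (hcpt : IsCompact (F x₀))
    (hγ : 0 ≤ γ) (hgrowth : ∀ y, ∀ w ∈ F y, ‖w‖ ≤ γ * (1 + ‖y‖)) (hL : 0 ≤ L)
    (hLip : ∀ y ∈ Metric.closedBall x₀ 1, ∀ z ∈ Metric.closedBall x₀ 1, ∀ v ∈ F y,
      ∃ w ∈ F z, ‖v - w‖ ≤ L * ‖y - z‖)
    (hσ : 0 ≤ σ) (hx : IsTrajectory F x₀ T x) (hs : 0 < s) (hsT : s ≤ T)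
    (hsmall : γ * (2 + ‖x₀‖) * s ≤ 1 / 2) (hζ : ⟪ζ, x s - x₀⟫ ≤ σ * ‖x s - x₀‖ ^ 2) :
    minHam F x₀ ζ ≤ (σ * (γ * (2 + ‖x₀‖)) ^ 2 + L * (γ * (2 + ‖x₀‖)) * ‖ζ‖) * s := by
  set c := γ * (2 + ‖x₀‖)
  have hc : 0 ≤ c := by positivity
  have hbound : ∀ u ∈ Icc 0 s, ‖x u - x₀‖ ≤ c * s := fun u hu =>
    (hx.norm_sub_le_mul hγ hgrowth ⟨hu.1, hu.2.trans hsT⟩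
      ((mul_le_mul_of_nonneg_left hu.2 hc).trans hsmall)).trans
      (mul_le_mul_of_nonneg_left hu.2 hc)
  have hq : s⁻¹ • (x s - x₀) ∈ Metric.cthickening (L * (c * s)) (F x₀) := by
    refine hx.inv_smul_sub_mem hs hsT (hconv.cthickening _) Metric.isClosed_cthickening
      fun u hu v hv => ?_
    have hxu := hbound u ⟨hu.1.le, hu.2⟩
    obtain ⟨w, hw, hvw⟩ := hLip (x u) (mem_closedBall_iff_norm.2 (by linarith)) x₀
      (Metric.mem_closedBall_self zero_le_one) v hv
    exact Metric.mem_cthickening_of_dist_le v w _ _ hw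
      (by rw [dist_eq_norm]; exact hvw.trans (by gcongr))
  calc minHam F x₀ ζ ≤ ⟪s⁻¹ • (x s - x₀), ζ⟫ + L * (c * s) * ‖ζ‖ :=
        minHam_le_inner_add_of_mem_cthickening hcpt (by positivity) hq
    _ = s⁻¹ * ⟪ζ, x s - x₀⟫ + L * (c * s) * ‖ζ‖ := by rw [real_inner_smul_left, real_inner_comm]
    _ ≤ s⁻¹ * (σ * (c * s) ^ 2) + L * (c * s) * ‖ζ‖ := by
        gcongr
        exact hζ.trans (by gcongr; exact hbound s ⟨hs.le, le_rfl⟩)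
    _ = (σ * c ^ 2 + L * c * ‖ζ‖) * s := by field_simp

theorem nonpos_of_eventually_le_mul {a C : ℝ} (h : ∀ᶠ δ in 𝓝[>] 0, a ≤ C * δ) : a ≤ 0 :=
  ge_of_tendsto (by simpa using ((continuous_const_mul C).tendsto 0).mono_left nhdsWithin_le_nhds)
    h

theorem minHam_nonpos_of_proxNormal_sublevel_general {n : ℕ}
    (F : EuclideanSpace ℝ (Fin n) → Set (EuclideanSpace ℝ (Fin n)))
    (K : Set (EuclideanSpace ℝ (Fin n))) (hF : AssumptionF F)
    (x₀ : EuclideanSpace ℝ (Fin n)) (hx₀R : minTime F K x₀ ≠ ⊤) (hx₀K : x₀ ∉ K)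
    (ζ : EuclideanSpace ℝ (Fin n))
    (hζ : IsProxNormal (sublevel F K (minTime F K x₀).toReal) x₀ ζ) :
    minHam F x₀ ζ ≤ 0 := by
  obtain ⟨σ, hσ, hσζ⟩ := hζ
  obtain ⟨γ, hγ, hgrowth⟩ := hF.growth
  obtain ⟨L, hL, hLip⟩ := hF.locLip _ (isCompact_closedBall x₀ 1)
  set c := γ * (2 + ‖x₀‖)
  have hsmall : ∀ᶠ δ in 𝓝[>] 0, c * δ ≤ 1 / 2 :=
    (((continuous_const_mul c).tendsto' 0 0 (mul_zero c)).eventually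
      (ge_mem_nhds (by norm_num))).filter_mono nhdsWithin_le_nhds
  refine nonpos_of_eventually_le_mul (C := σ * c ^ 2 + L * c * ‖ζ‖) ?_
  filter_upwards [self_mem_nhdsWithin, hsmall] with δ (hδ : 0 < δ) hcδ
  obtain ⟨T, x, s, hx, hs, hsδ, hsT, hsub⟩ := exists_isTrajectory_mem_sublevel hx₀R hx₀K hδ
  calc minHam F x₀ ζ ≤ (σ * c ^ 2 + L * c * ‖ζ‖) * s :=
        minHam_le_of_isTrajectory (hF.convex x₀) (hF.compact x₀) hγ.le hgrowth hL.le hLip hσ hx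
          hs hsT ((mul_le_mul_of_nonneg_left hsδ (by positivity)).trans hcδ) (hσζ _ hsub)
    _ ≤ (σ * c ^ 2 + L * c * ‖ζ‖) * δ := by gcongr

/-- for `x₀ ∈ 𝓡 \ K` and `ζ ∈ N^P_{𝓡(𝒯(x₀))}(x₀)`, one has `h(x₀,ζ) ≤ 0`. -/
theorem minHam_nonpos_of_proxNormal_sublevel {n : ℕ}
    (F : EuclideanSpace ℝ (Fin n) → Set (EuclideanSpace ℝ (Fin n)))
    (K : Set (EuclideanSpace ℝ (Fin n))) (hF : AssumptionF F) (hK : IsClosed K)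
    (x₀ : EuclideanSpace ℝ (Fin n)) (hx₀R : minTime F K x₀ ≠ ⊤) (hx₀K : x₀ ∉ K)
    (ζ : EuclideanSpace ℝ (Fin n))
    (hζ : IsProxNormal (sublevel F K (minTime F K x₀).toReal) x₀ ζ) :
    minHam F x₀ ζ ≤ 0 :=
  minHam_nonpos_of_proxNormal_sublevel_general F K hF x₀ hx₀R hx₀K ζ hζ
end
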